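/- arXiv:1604.06973 — 4 statements merged into one kernel-verified Lean document; each statement's English description precedes it below -/
import Mathlib

section
/- Let (θ,θ') be a factor pair of a set X. Then every equivalence class of θ is equinumerous with the set X/θ' of equivalence classes of θ', and every equivalence class of θ' is equinumerous with the set X/θ of equivalence classes of θ. In particular both θ and θ' are regular equivalence relations. -/
/-- A factor pair is a pair of equivalence relations with `θ ∩ θ' = Δ` and `θ ∘ θ' = ∇`. -/
def IsFactorPair {X : Type*} (θ θ' : Setoid X) : Prop :=
  (∀ x y : X, θ x y ∧ θ' x y ↔ x = y) ∧
  ∀ x y : X, Relation.Comp (⇑θ) (⇑θ') x y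

/-- `Fact X`, the set of factor pairs of `X`. -/
def FactPair (X : Type*) : Type _ :=
  {p : Setoid X × Setoid X // IsFactorPair p.1 p.2}

/-- The order on `Fact X`: `(θ,θ') ≤ (φ,φ')` iff `φ ⊆ θ`, `θ' ⊆ φ'` and `φ∘θ' = θ'∘φ`. -/
def FactLE {X : Type*} (p q : FactPair X) : Prop :=
  q.1.1 ≤ p.1.1 ∧ p.1.2 ≤ q.1.2 ∧
    Relation.Comp (⇑q.1.1) (⇑p.1.2) = Relation.Comp (⇑p.1.2) (⇑q.1.1)

def FactLT {X : Type*} (p q : FactPair X) : Prop :=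
  FactLE p q ∧ p ≠ q

/-- The orthocomplementation `(θ,θ')^⊥ = (θ',θ)` on `Fact X`. -/
def FactPerp {X : Type*} (p : FactPair X) : FactPair X :=
  ⟨(p.1.2, p.1.1), by
    obtain ⟨h1, h2⟩ := p.2
    refine ⟨fun x y => ⟨fun h => (h1 x y).1 ⟨h.2, h.1⟩, ?_⟩, fun x y => ?_⟩
    · rintro rfl
      exact ⟨p.1.2.refl' x, p.1.1.refl' x⟩
    · obtain ⟨z, hz1, hz2⟩ := h2 y x
      exact ⟨z, p.1.2.symm' hz2, p.1.1.symm' hz1⟩⟩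

/-- `0 = (∇,Δ)` in `Fact X`. -/
def FactZero (X : Type*) : FactPair X :=
  ⟨(⊤, ⊥), by
    refine ⟨fun x y => ⟨fun h => ?_, ?_⟩, fun x y => ⟨y, ?_, ?_⟩⟩
    · simpa [Setoid.bot_def] using h.2
    · rintro rfl
      exact ⟨(⊤ : Setoid X).refl' x, (⊥ : Setoid X).refl' x⟩
    · simp [Setoid.top_def]
    · simp [Setoid.bot_def]⟩

/-- `1 = (Δ,∇)` in `Fact X`. -/
def FactOne (X : Type*) : FactPair X :=
  ⟨(⊥, ⊤), by
    refine ⟨fun x y => ⟨fun h => ?_, ?_⟩, fun x y => ⟨x, ?_, ?_⟩⟩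
    · simpa [Setoid.bot_def] using h.1
    · rintro rfl
      exact ⟨(⊥ : Setoid X).refl' x, (⊤ : Setoid X).refl' x⟩
    · simp [Setoid.bot_def]
    · simp [Setoid.top_def]⟩

/-- An atom of `Fact X`. -/
def IsFactAtom {X : Type*} (a : FactPair X) : Prop :=
  FactLT (FactZero X) a ∧ ∀ x : FactPair X, FactLT (FactZero X) x → ¬ FactLT x a

/-- An `n`-relation: every equivalence class has exactly `n` elements. -/
def IsNRel {X : Type*} (n : ℕ) (θ : Setoid X) : Prop :=
  ∀ x : X, Nat.card {y // θ x y} = n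

/-- A `p`-atom: an atom `(φ,φ')` such that `φ'` is a `p`-relation. -/
def IsPAtom {X : Type*} (p : ℕ) (a : FactPair X) : Prop :=
  IsFactAtom a ∧ IsNRel p a.1.2

/-- The image `σ(θ) = {(σ x, σ y) : (x,y) ∈ θ}` of an equivalence relation under a
permutation. -/
def permSetoid {X : Type*} (σ : Equiv.Perm X) (θ : Setoid X) : Setoid X :=
  ⟨fun a b => θ (σ.symm a) (σ.symm b),
    ⟨fun a => θ.refl' _, fun h => θ.symm' h, fun h1 h2 => θ.trans' h1 h2⟩⟩

/-- The action `Γ(σ)(θ,θ') = (σ(θ),σ(θ'))` of a permutation on factor pairs. -/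
def permFactPair {X : Type*} (σ : Equiv.Perm X) (t : FactPair X) : FactPair X :=
  ⟨(permSetoid σ t.1.1, permSetoid σ t.1.2), by
    obtain ⟨h1, h2⟩ := t.2
    refine ⟨fun x y => ⟨fun h => ?_, ?_⟩, fun x y => ?_⟩
    · exact σ.symm.injective ((h1 (σ.symm x) (σ.symm y)).1 ⟨h.1, h.2⟩)
    · rintro rfl
      exact ⟨t.1.1.refl' _, t.1.2.refl' _⟩
    · obtain ⟨w, hw1, hw2⟩ := h2 (σ.symm x) (σ.symm y)
      refine ⟨σ w, ?_, ?_⟩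
      · show t.1.1 (σ.symm x) (σ.symm (σ w))
        simpa using hw1
      · show t.1.2 (σ.symm (σ w)) (σ.symm y)
        simpa using hw2⟩

/-- An automorphism of `Fact X`: a bijection preserving `≤` in both directions and
commuting with `⊥`. -/
def IsFactAut {X : Type*} (α : FactPair X → FactPair X) : Prop :=
  Function.Bijective α ∧
  (∀ p q : FactPair X, FactLE p q ↔ FactLE (α p) (α q)) ∧
  ∀ p : FactPair X, α (FactPerp p) = FactPerp (α p)

/-- `Eq*(X)`: the equivalence relations on `X` that are `n`-relations for some `n ≥ 1`. -/
def EqStar (X : Type*) : Type _ :=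
  {θ : Setoid X // ∃ n : ℕ, 0 < n ∧ IsNRel n θ}

/-- A regular equivalence relation: any two classes are equinumerous. -/
def IsRegularRel {X : Type*} (θ : Setoid X) : Prop :=
  ∀ x y : X, Nonempty ({z // θ x z} ≃ {z // θ y z})

/-- The action of a permutation on `Eq*(X)`. -/
def permEqStar {X : Type*} (σ : Equiv.Perm X) (θ : EqStar X) : EqStar X :=
  ⟨permSetoid σ θ.1, by
    obtain ⟨n, hn, hrel⟩ := θ.2
    refine ⟨n, hn, fun x => ?_⟩
    have e : {y // (permSetoid σ θ.1) x y} ≃ {y // θ.1 (σ.symm x) y} :=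
      σ.symm.subtypeEquiv fun y => Iff.rfl
    rw [Nat.card_congr e]
    exact hrel (σ.symm x)⟩


private lemma factorPair_aux {X : Type*} (θ θ' : Setoid X)
    (h1 : ∀ x y : X, θ x y ∧ θ' x y ↔ x = y)
    (h2 : ∀ x y : X, Relation.Comp (⇑θ) (⇑θ') x y) (x : X) :
    Nonempty ({y // θ x y} ≃ Quotient θ') := by
  refine ⟨Equiv.ofBijective (fun y => Quotient.mk θ' y.1) ⟨?_, ?_⟩⟩
  · rintro ⟨a, ha⟩ ⟨b, hb⟩ hab
    have h' : θ' a b := Quotient.exact hab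
    have : θ a b := θ.trans' (θ.symm' ha) hb
    exact Subtype.ext ((h1 a b).1 ⟨this, h'⟩)
  · rintro ⟨w⟩
    obtain ⟨z, hz1, hz2⟩ := h2 x w
    exact ⟨⟨z, hz1⟩, Quotient.sound hz2⟩

/-- For a factor pair `(θ,θ')` of `X`: every class of `θ` is equinumerous with `X/θ'`,
every class of `θ'` is equinumerous with `X/θ`; in particular both are regular. -/
theorem factorPair_classes_equinumerous (X : Type*) (θ θ' : Setoid X)
    (h : IsFactorPair θ θ') :
    (∀ x : X, Nonempty ({y // θ x y} ≃ Quotient θ')) ∧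
    (∀ x : X, Nonempty ({y // θ' x y} ≃ Quotient θ)) ∧
    IsRegularRel θ ∧ IsRegularRel θ' := by
  have h1 := h.1
  have h2 := h.2
  have h1' : ∀ x y : X, θ' x y ∧ θ x y ↔ x = y := fun x y =>
    ⟨fun hh => (h1 x y).1 ⟨hh.2, hh.1⟩, fun hh => by
      subst hh; exact ⟨θ'.refl' x, θ.refl' x⟩⟩
  have h2' : ∀ x y : X, Relation.Comp (⇑θ') (⇑θ) x y := fun x y => by
    obtain ⟨z, hz1, hz2⟩ := h2 y x
    exact ⟨z, θ'.symm' hz2, θ.symm' hz1⟩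
  have A : ∀ x : X, Nonempty ({y // θ x y} ≃ Quotient θ') :=
    fun x => factorPair_aux θ θ' h1 h2 x
  have B : ∀ x : X, Nonempty ({y // θ' x y} ≃ Quotient θ) :=
    fun x => factorPair_aux θ' θ h1' h2' x
  refine ⟨A, B, fun x y => ?_, fun x y => ?_⟩
  · obtain ⟨ex⟩ := A x; obtain ⟨ey⟩ := A y; exact ⟨ex.trans ey.symm⟩
  · obtain ⟨ex⟩ := B x; obtain ⟨ey⟩ := B y; exact ⟨ex.trans ey.symm⟩
end

section
/- For an equivalence relation θ on a set X, the following are equivalent: (1) θ is regular; (2) there is an equivalence relation θ' on X such that (θ,θ') is a factor pair of X. -/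
/-- An equivalence relation `θ` on `X` is regular iff there is an equivalence relation
`θ'` with `(θ,θ')` a factor pair of `X`. -/
theorem isRegularRel_iff_exists_factorPair (X : Type*) (θ : Setoid X) :
    IsRegularRel θ ↔ ∃ θ' : Setoid X, IsFactorPair θ θ' := by
  constructor
  · intro hreg
    by_cases hX : Nonempty X
    · obtain ⟨x₀⟩ := hX
      have key : ∀ q : Quotient θ,
          Nonempty ({z // Quotient.mk θ z = q} ≃ {z // θ x₀ z}) := by
        intro q
        induction q using Quotient.inductionOn with
        | h a =>
          have e1 : {z // Quotient.mk θ z = Quotient.mk θ a} ≃ {z // θ a z} :=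
            Equiv.subtypeEquivRight (fun z => by
              rw [Quotient.eq]
              exact ⟨fun h => θ.symm' h, fun h => θ.symm' h⟩)
          exact ⟨e1.trans (Classical.choice (hreg a x₀))⟩
      let e : ∀ q : Quotient θ, {z // Quotient.mk θ z = q} ≃ {z // θ x₀ z} :=
        fun q => Classical.choice (key q)
      have aux : ∀ (a : X) (q : Quotient θ) (h : Quotient.mk θ a = q),
          e (Quotient.mk θ a) ⟨a, rfl⟩ = e q ⟨a, h⟩ := by
        intro a q h; subst h; rfl
      refine ⟨⟨fun a b => e (Quotient.mk θ a) ⟨a, rfl⟩ = e (Quotient.mk θ b) ⟨b, rfl⟩,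
        ⟨fun a => rfl, fun h => h.symm, fun h1 h2 => h1.trans h2⟩⟩, ?_, ?_⟩
      · intro x y
        constructor
        · rintro ⟨hθ, hθ'⟩
          have hq : Quotient.mk θ x = Quotient.mk θ y := Quotient.sound hθ
          have : e (Quotient.mk θ y) ⟨x, hq⟩ = e (Quotient.mk θ y) ⟨y, rfl⟩ := by
            rw [← aux x _ hq]; exact hθ'
          have := (e (Quotient.mk θ y)).injective this
          exact congrArg Subtype.val this
        · rintro rfl
          exact ⟨θ.refl' x, rfl⟩
      · intro a b
        set zfull := (e (Quotient.mk θ a)).symm (e (Quotient.mk θ b) ⟨b, rfl⟩) with hzf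
        refine ⟨zfull.1, ?_, ?_⟩
        · have : Quotient.mk θ zfull.1 = Quotient.mk θ a := zfull.2
          exact θ.symm' (Quotient.eq.mp this)
        · show e (Quotient.mk θ zfull.1) ⟨zfull.1, rfl⟩ = e (Quotient.mk θ b) ⟨b, rfl⟩
          rw [aux zfull.1 (Quotient.mk θ a) zfull.2]
          have : (⟨zfull.1, zfull.2⟩ : {z // Quotient.mk θ z = Quotient.mk θ a}) = zfull := rfl
          rw [this, hzf, Equiv.apply_symm_apply]
    · exact ⟨θ, fun x y => (hX ⟨x⟩).elim, fun x y => (hX ⟨x⟩).elim⟩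
  · rintro ⟨θ', h1, h2⟩ x y
    have uniq : ∀ a b z w, θ a z → θ' z b → θ a w → θ' w b → z = w := by
      intro a b z w hz hz' hw hw'
      exact (h1 z w).1 ⟨θ.trans' (θ.symm' hz) hw, θ'.trans' hz' (θ'.symm' hw')⟩
    choose u hu1 hu2 using h2
    refine ⟨⟨fun z => ⟨u y z.1, hu1 y z.1⟩, fun z => ⟨u x z.1, hu1 x z.1⟩, ?_, ?_⟩⟩
    · intro z
      apply Subtype.ext
      exact uniq x (u y z.1) _ z.1 (hu1 x _) (hu2 x _) z.2 (θ'.symm' (hu2 y z.1))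
    · intro z
      apply Subtype.ext
      exact uniq y (u x z.1) _ z.1 (hu1 y _) (hu2 y _) z.2 (θ'.symm' (hu2 x z.1))
end

section
/- For a non-empty set X, (Fact(X), ≤, ⊥, 0, 1) is an orthomodular poset: ≤ is a partial order on Fact(X) with least element 0 = (∇,Δ) and greatest element 1 = (Δ,∇); the map ⊥ is order-reversing and an involution; for every x in Fact(X), the only lower bound of x and x^⊥ is 0 and the only upper bound is 1; whenever x ≤ y^⊥, the pair x, y has a least upper bound x⊕y; and whenever x ≤ y^⊥, one has x ⊕ (x⊕y)^⊥ = y^⊥. -/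
/-! For orthogonal `p = (θ,θ')` and `q = (φ,φ')`, i.e. `p ≤ q^⊥`, the relations `θ'` and `φ'`
commute, so `θ' ∘ φ'` is an equivalence relation and `p ⊕ q = (θ ∩ φ, θ' ∘ φ')` is a factor pair;
it is the least upper bound of `p` and `q`. For orthomodularity, an element chase shows that every
common upper bound of `p` and `(p ⊕ q)^⊥` lies above `q^⊥`, while `q^⊥` is itself such a bound. -/

section FactorPairs

variable {X : Type*}

theorem IsFactorPair.eq_of_rel {θ θ' : Setoid X} (h : IsFactorPair θ θ') {x y : X}
    (hθ : θ x y) (hθ' : θ' x y) : x = y :=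
  (h.1 x y).1 ⟨hθ, hθ'⟩

theorem IsFactorPair.inf_le_bot {θ θ' : Setoid X} (h : IsFactorPair θ θ') : θ ⊓ θ' ≤ ⊥ :=
  fun _ _ hxy => h.eq_of_rel hxy.1 hxy.2

theorem IsFactorPair.comp_swap {θ θ' : Setoid X} (h : IsFactorPair θ θ') (x y : X) :
    Relation.Comp (⇑θ') (⇑θ) x y := by
  obtain ⟨z, hyz, hzx⟩ := h.2 y x
  exact ⟨z, θ'.symm' hzx, θ.symm' hyz⟩

theorem Relation.Comp.swap_of_comm {α β : X → X → Prop}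
    (hαβ : Relation.Comp α β = Relation.Comp β α) {x y : X} (h : Relation.Comp α β x y) :
    Relation.Comp β α x y :=
  hαβ ▸ h

/-- For equivalence relations `β ∘ α` is the converse of `α ∘ β`, so one inclusion suffices. -/
theorem Setoid.comp_comm_of_le {α β : Setoid X}
    (h : ∀ x y, Relation.Comp (⇑α) (⇑β) x y → Relation.Comp (⇑β) (⇑α) x y) :
    Relation.Comp (⇑α) (⇑β) = Relation.Comp (⇑β) (⇑α) := by
  funext x y
  refine propext ⟨h x y, fun ⟨z, hxz, hzy⟩ => ?_⟩
  obtain ⟨w, hyw, hwx⟩ := h y x ⟨z, α.symm' hzy, β.symm' hxz⟩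
  exact ⟨w, α.symm' hwx, β.symm' hyw⟩

def Setoid.compOfComm (α β : Setoid X)
    (h : Relation.Comp (⇑β) (⇑α) = Relation.Comp (⇑α) (⇑β)) : Setoid X where
  r := Relation.Comp α β
  iseqv :=
    { refl := fun x => ⟨x, α.refl' x, β.refl' x⟩
      symm := fun ⟨z, hxz, hzy⟩ => Relation.Comp.swap_of_comm h ⟨z, β.symm' hzy, α.symm' hxz⟩
      trans := fun ⟨u, hxu, huy⟩ ⟨v, hyv, hvw⟩ => by
        obtain ⟨w, huw, hwv⟩ := Relation.Comp.swap_of_comm h ⟨_, huy, hyv⟩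
        exact ⟨w, α.trans' hxu huw, β.trans' hwv hvw⟩ }

theorem IsFactorPair.inf_compOfComm {θ θ' φ φ' : Setoid X} (hθ : IsFactorPair θ θ')
    (hφ : IsFactorPair φ φ') (hθ'φ : θ' ≤ φ)
    (hcomm : Relation.Comp (⇑φ') (⇑θ') = Relation.Comp (⇑θ') (⇑φ')) :
    IsFactorPair (θ ⊓ φ) (Setoid.compOfComm θ' φ' hcomm) := by
  refine ⟨fun x y => ⟨fun ⟨⟨hθxy, hφxy⟩, z, hθ'xz, hφ'zy⟩ => ?_, ?_⟩, fun x y => ?_⟩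
  · have hzy : z = y := hφ.eq_of_rel (φ.trans' (φ.symm' (hθ'φ hθ'xz)) hφxy) hφ'zy
    subst hzy
    exact hθ.eq_of_rel hθxy hθ'xz
  · rintro rfl
    exact ⟨⟨θ.refl' x, φ.refl' x⟩, x, θ'.refl' x, φ'.refl' x⟩
  · obtain ⟨u, hφxu, hφ'uy⟩ := hφ.2 x y
    obtain ⟨m, hθxm, hθ'mu⟩ := hθ.2 x u
    exact ⟨m, ⟨hθxm, φ.trans' hφxu (φ.symm' (hθ'φ hθ'mu))⟩, u, hθ'mu, hφ'uy⟩

end FactorPairs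

section FactOrder

variable {X : Type*}

theorem FactPair.ext {p q : FactPair X} (h₁ : p.1.1 = q.1.1) (h₂ : p.1.2 = q.1.2) : p = q :=
  Subtype.ext (Prod.ext h₁ h₂)

theorem FactPair.eq_factZero_of_snd_le_bot {p : FactPair X} (h : p.1.2 ≤ ⊥) :
    p = FactZero X := by
  refine FactPair.ext (Setoid.eq_top_iff.2 fun x y => ?_) (le_bot_iff.1 h)
  obtain ⟨z, hxz, hzy⟩ := p.2.2 x y
  obtain rfl : z = y := h hzy
  exact hxz

theorem FactPair.eq_factOne_of_fst_le_bot {p : FactPair X} (h : p.1.1 ≤ ⊥) :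
    p = FactOne X := by
  refine FactPair.ext (le_bot_iff.1 h) (Setoid.eq_top_iff.2 fun x y => ?_)
  obtain ⟨z, hxz, hzy⟩ := p.2.2 x y
  obtain rfl : x = z := h hxz
  exact hzy

theorem FactLE.refl (p : FactPair X) : FactLE p p :=
  ⟨le_rfl, le_rfl, Setoid.comp_comm_of_le fun x y _ => p.2.comp_swap x y⟩

theorem FactLE.antisymm {p q : FactPair X} (hpq : FactLE p q) (hqp : FactLE q p) : p = q :=
  FactPair.ext (le_antisymm hqp.1 hpq.1) (le_antisymm hpq.2.1 hqp.2.1)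

theorem FactLE.trans {p q r : FactPair X} (hpq : FactLE p q) (hqr : FactLE q r) :
    FactLE p r := by
  refine ⟨hqr.1.trans hpq.1, hpq.2.1.trans hqr.2.1,
    Setoid.comp_comm_of_le fun x y ⟨z, hxz, hzy⟩ => ?_⟩
  obtain ⟨n, hxn, hny⟩ := Relation.Comp.swap_of_comm hpq.2.2 ⟨z, hqr.1 hxz, hzy⟩
  obtain ⟨t, hnt, htz⟩ :=
    Relation.Comp.swap_of_comm hqr.2.2.symm ⟨x, hpq.2.1 (p.1.2.symm' hxn), hxz⟩
  have hty : t = y := q.2.eq_of_rel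
    (q.1.1.trans' (q.1.1.symm' (hqr.1 hnt)) hny) (q.1.2.trans' htz (hpq.2.1 hzy))
  exact ⟨n, hxn, hty ▸ hnt⟩

theorem FactLE.perp {p q : FactPair X} (h : FactLE p q) : FactLE (FactPerp q) (FactPerp p) :=
  ⟨h.2.1, h.1, h.2.2.symm⟩

theorem factPerp_factPerp (p : FactPair X) : FactPerp (FactPerp p) = p := rfl

theorem factZero_factLE (p : FactPair X) : FactLE (FactZero X) p := by
  refine ⟨le_top, bot_le, Setoid.comp_comm_of_le fun x y ⟨z, hxz, hzy⟩ => ?_⟩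
  obtain rfl : z = y := hzy
  exact ⟨x, rfl, hxz⟩

theorem factLE_factOne (p : FactPair X) : FactLE p (FactOne X) := by
  refine ⟨bot_le, le_top, Setoid.comp_comm_of_le fun x y ⟨z, hxz, hzy⟩ => ?_⟩
  obtain rfl : x = z := hxz
  exact ⟨y, hzy, rfl⟩

theorem eq_factZero_of_factLE_of_factLE_perp {p x : FactPair X} (hp : FactLE x p)
    (hperp : FactLE x (FactPerp p)) : x = FactZero X :=
  FactPair.eq_factZero_of_snd_le_bot ((le_inf hperp.2.1 hp.2.1).trans p.2.inf_le_bot)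

theorem eq_factOne_of_factLE_of_perp_factLE {p x : FactPair X} (hp : FactLE p x)
    (hperp : FactLE (FactPerp p) x) : x = FactOne X :=
  FactPair.eq_factOne_of_fst_le_bot ((le_inf hp.1 hperp.1).trans p.2.inf_le_bot)

end FactOrder

section FactJoin

variable {X : Type*}

/-- The join `p ⊕ q` of orthogonal factor pairs. -/
def factJoin (p q : FactPair X) (h : FactLE p (FactPerp q)) : FactPair X :=
  ⟨(p.1.1 ⊓ q.1.1, Setoid.compOfComm p.1.2 q.1.2 h.2.2),
    p.2.inf_compOfComm q.2 h.2.1 h.2.2⟩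

variable {p q : FactPair X}

theorem factLE_factJoin_left (h : FactLE p (FactPerp q)) : FactLE p (factJoin p q h) := by
  refine ⟨inf_le_left, fun x y hxy => ⟨y, hxy, q.1.2.refl' y⟩,
    Setoid.comp_comm_of_le fun x y ⟨z, hxz, hzy⟩ => ?_⟩
  obtain ⟨w, hxw, hwy⟩ := p.2.comp_swap x y
  exact ⟨w, hxw, hwy,
    q.1.1.trans' (q.1.1.symm' (h.2.1 hxw)) (q.1.1.trans' hxz.2 (h.2.1 hzy))⟩

theorem factLE_factJoin_right (h : FactLE p (FactPerp q)) : FactLE q (factJoin p q h) := by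
  refine ⟨inf_le_right, fun x y hxy => ⟨x, p.1.2.refl' x, hxy⟩,
    Setoid.comp_comm_of_le fun x y ⟨z, hxz, hzy⟩ => ?_⟩
  obtain ⟨w, hxw, hwy⟩ := q.2.comp_swap x y
  exact ⟨w, hxw, p.1.1.trans' (p.1.1.symm' (h.1 hxw)) (p.1.1.trans' hxz.1 (h.1 hzy)), hwy⟩

theorem factJoin_factLE (h : FactLE p (FactPerp q)) {r : FactPair X} (hpr : FactLE p r)
    (hqr : FactLE q r) : FactLE (factJoin p q h) r := by
  refine ⟨le_inf hpr.1 hqr.1, fun x y ⟨z, hxz, hzy⟩ => r.1.2.trans' (hpr.2.1 hxz) (hqr.2.1 hzy),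
    Setoid.comp_comm_of_le fun x y ⟨z, hxz, b, hzb, hby⟩ => ?_⟩
  obtain ⟨c, hxc, hcb⟩ := Relation.Comp.swap_of_comm hpr.2.2 ⟨z, hxz, hzb⟩
  obtain ⟨w, hcw, hwy⟩ := Relation.Comp.swap_of_comm hqr.2.2 ⟨b, hcb, hby⟩
  exact ⟨w, ⟨c, hxc, hcw⟩, hwy⟩

theorem perp_factLE_of_factLE_of_perp_factJoin_factLE (h : FactLE p (FactPerp q))
    {r : FactPair X} (hpr : FactLE p r) (hsr : FactLE (FactPerp (factJoin p q h)) r) :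
    FactLE (FactPerp q) r := by
  have hmeet : p.1.1 ⊓ q.1.1 ≤ r.1.2 := hsr.2.1
  refine ⟨fun x y hxy => ?_, fun x y hqxy => ?_,
    Setoid.comp_comm_of_le fun x y ⟨z, hxz, hzy⟩ => ?_⟩
  · obtain ⟨c, hxc, hcy⟩ := hsr.1 hxy
    have hxc' : x = c :=
      p.2.eq_of_rel (p.1.1.trans' (hpr.1 hxy) (p.1.1.symm' (h.1 hcy))) hxc
    exact hxc' ▸ hcy
  · obtain ⟨m, hxm, hmy⟩ := p.2.comp_swap x y
    exact r.1.2.trans' (hpr.2.1 hxm) (hmeet ⟨hmy, q.1.1.trans' (q.1.1.symm' (h.2.1 hxm)) hqxy⟩)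
  · obtain ⟨m, hzm, hmy⟩ := p.2.comp_swap z y
    have hmeet_my : (p.1.1 ⊓ q.1.1) m y := ⟨hmy, q.1.1.trans' (q.1.1.symm' (h.2.1 hzm)) hzy⟩
    obtain ⟨c, hxc, hcm⟩ := Relation.Comp.swap_of_comm hpr.2.2 ⟨z, hxz, hzm⟩
    obtain ⟨w, hcw, hwy⟩ := Relation.Comp.swap_of_comm hsr.2.2 ⟨m, hcm, hmeet_my⟩
    exact ⟨w, q.1.1.trans' (h.2.1 hxc) hcw.2, hwy⟩

end FactJoin

theorem factPair_orthomodularPoset_general (X : Type*) :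
    -- `≤` is a partial order
    (∀ p : FactPair X, FactLE p p) ∧
    (∀ p q : FactPair X, FactLE p q → FactLE q p → p = q) ∧
    (∀ p q r : FactPair X, FactLE p q → FactLE q r → FactLE p r) ∧
    -- least element `0` and greatest element `1`
    (∀ p : FactPair X, FactLE (FactZero X) p) ∧
    (∀ p : FactPair X, FactLE p (FactOne X)) ∧
    -- `⊥` is order-reversing and an involution
    (∀ p q : FactPair X, FactLE p q → FactLE (FactPerp q) (FactPerp p)) ∧
    (∀ p : FactPair X, FactPerp (FactPerp p) = p) ∧
    -- the only lower bound of `p, p^⊥` is `0`, the only upper bound is `1`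
    (∀ p x : FactPair X, FactLE x p → FactLE x (FactPerp p) → x = FactZero X) ∧
    (∀ p x : FactPair X, FactLE p x → FactLE (FactPerp p) x → x = FactOne X) ∧
    -- orthogonal pairs have a least upper bound
    (∀ p q : FactPair X, FactLE p (FactPerp q) →
      ∃ s : FactPair X, FactLE p s ∧ FactLE q s ∧
        ∀ r : FactPair X, FactLE p r → FactLE q r → FactLE s r) ∧
    -- the orthomodular law: `p ⊕ (p ⊕ q)^⊥ = q^⊥` whenever `p ≤ q^⊥`
    (∀ p q s t : FactPair X, FactLE p (FactPerp q) →
      (FactLE p s ∧ FactLE q s ∧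
        ∀ r : FactPair X, FactLE p r → FactLE q r → FactLE s r) →
      (FactLE p t ∧ FactLE (FactPerp s) t ∧
        ∀ r : FactPair X, FactLE p r → FactLE (FactPerp s) r → FactLE t r) →
      t = FactPerp q) := by
  refine ⟨FactLE.refl, fun _ _ => FactLE.antisymm, fun _ _ _ => FactLE.trans, factZero_factLE,
    factLE_factOne, fun _ _ => FactLE.perp, factPerp_factPerp,
    fun _ _ => eq_factZero_of_factLE_of_factLE_perp,
    fun _ _ => eq_factOne_of_factLE_of_perp_factLE, fun p q h => ?_, fun p q s t h hs ht => ?_⟩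
  · exact ⟨factJoin p q h, factLE_factJoin_left h, factLE_factJoin_right h,
      fun _ => factJoin_factLE h⟩
  · have hs_eq : s = factJoin p q h :=
      (hs.2.2 _ (factLE_factJoin_left h) (factLE_factJoin_right h)).antisymm
        (factJoin_factLE h hs.1 hs.2.1)
    subst hs_eq
    exact (ht.2.2 _ h (factLE_factJoin_right h).perp).antisymm
      (perp_factLE_of_factLE_of_perp_factJoin_factLE h ht.1 ht.2.1)

/-- For a non-empty set `X`, `(Fact X, ≤, ⊥, 0, 1)` is an orthomodular poset. -/
theorem factPair_orthomodularPoset (X : Type*) [Nonempty X] :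
    -- `≤` is a partial order
    (∀ p : FactPair X, FactLE p p) ∧
    (∀ p q : FactPair X, FactLE p q → FactLE q p → p = q) ∧
    (∀ p q r : FactPair X, FactLE p q → FactLE q r → FactLE p r) ∧
    -- least element `0` and greatest element `1`
    (∀ p : FactPair X, FactLE (FactZero X) p) ∧
    (∀ p : FactPair X, FactLE p (FactOne X)) ∧
    -- `⊥` is order-reversing and an involution
    (∀ p q : FactPair X, FactLE p q → FactLE (FactPerp q) (FactPerp p)) ∧
    (∀ p : FactPair X, FactPerp (FactPerp p) = p) ∧
    -- the only lower bound of `p, p^⊥` is `0`, the only upper bound is `1`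
    (∀ p x : FactPair X, FactLE x p → FactLE x (FactPerp p) → x = FactZero X) ∧
    (∀ p x : FactPair X, FactLE p x → FactLE (FactPerp p) x → x = FactOne X) ∧
    -- orthogonal pairs have a least upper bound
    (∀ p q : FactPair X, FactLE p (FactPerp q) →
      ∃ s : FactPair X, FactLE p s ∧ FactLE q s ∧
        ∀ r : FactPair X, FactLE p r → FactLE q r → FactLE s r) ∧
    -- the orthomodular law: `p ⊕ (p ⊕ q)^⊥ = q^⊥` whenever `p ≤ q^⊥`
    (∀ p q s t : FactPair X, FactLE p (FactPerp q) →
      (FactLE p s ∧ FactLE q s ∧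
        ∀ r : FactPair X, FactLE p r → FactLE q r → FactLE s r) →
      (FactLE p t ∧ FactLE (FactPerp s) t ∧
        ∀ r : FactPair X, FactLE p r → FactLE (FactPerp s) r → FactLE t r) →
      t = FactPerp q) :=
  factPair_orthomodularPoset_general X
end

section
/- Let X be a set, (γ,γ') a factor pair of X, and m, n positive integers. The following are equivalent: (1) X/γ is finite with exactly m·n elements; (2) there are factor pairs (θ,θ') and (φ,φ') with (θ,θ') ≤ (φ,φ')^⊥ whose least upper bound in Fact(X) is (γ,γ'), such that X/θ has exactly m elements and X/φ has exactly n elements. -/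
/-- For a factor pair `(γ,γ')` of `X` and positive integers `m, n`: `X/γ` is finite with
exactly `m·n` elements iff there are factor pairs `(θ,θ') ≤ (φ,φ')^⊥` whose least upper
bound in `Fact X` is `(γ,γ')` with `X/θ` having exactly `m` elements and `X/φ` exactly
`n` elements. -/
theorem quotient_card_mul_iff_orthogonal_join (X : Type*) (γ γ' : Setoid X)
    (h : IsFactorPair γ γ') (m n : ℕ) (hm : 0 < m) (hn : 0 < n) :
    (Finite (Quotient γ) ∧ Nat.card (Quotient γ) = m * n) ↔
      ∃ (θ θ' φ φ' : Setoid X) (hθ : IsFactorPair θ θ') (hφ : IsFactorPair φ φ'),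
        FactLE ⟨(θ, θ'), hθ⟩ (FactPerp ⟨(φ, φ'), hφ⟩) ∧
        (FactLE ⟨(θ, θ'), hθ⟩ ⟨(γ, γ'), h⟩ ∧ FactLE ⟨(φ, φ'), hφ⟩ ⟨(γ, γ'), h⟩ ∧
          ∀ u : FactPair X, FactLE ⟨(θ, θ'), hθ⟩ u → FactLE ⟨(φ, φ'), hφ⟩ u →
            FactLE ⟨(γ, γ'), h⟩ u) ∧
        (Finite (Quotient θ) ∧ Nat.card (Quotient θ) = m) ∧
        (Finite (Quotient φ) ∧ Nat.card (Quotient φ) = n) := by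

  have hDelta : ∀ x y : X, γ x y → γ' x y → x = y := fun x y h1 h2 => (h.1 x y).1 ⟨h1, h2⟩
  constructor
  · rintro ⟨hfin, hcard⟩
    have hne : Nat.card (Quotient γ) ≠ 0 := by
      rw [hcard]; exact Nat.mul_ne_zero hm.ne' hn.ne'
    let e : Quotient γ ≃ Fin m × Fin n :=
      ((Nat.equivFinOfCardPos hne).trans (finCongr hcard)).trans finProdFinEquiv.symm
    let f : X → Fin m × Fin n := fun x => e (Quotient.mk γ x)
    have key : ∀ (p : Fin m × Fin n) (y : X), ∃ z, f z = p ∧ γ' z y := by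
      intro p y
      obtain ⟨z, hz1, hz2⟩ := h.2 (e.symm p).out y
      refine ⟨z, ?_, hz2⟩
      have hz : Quotient.mk γ z = e.symm p := by
        conv_rhs => rw [← Quotient.out_eq (e.symm p)]
        exact (Quotient.sound hz1).symm
      show e (Quotient.mk γ z) = p
      rw [hz, Equiv.apply_symm_apply]
    have hgf : ∀ x y : X, γ x y → f x = f y := fun x y hxy => by
      show e (Quotient.mk γ x) = e (Quotient.mk γ y)
      rw [Quotient.sound hxy]
    have hfg : ∀ x y : X, f x = f y → γ x y := fun x y hxy =>
      Quotient.exact (e.injective hxy)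
    let θ : Setoid X := ⟨fun x y => (f x).1 = (f y).1,
      ⟨fun _ => rfl, fun h => h.symm, fun h1 h2 => h1.trans h2⟩⟩
    let θ' : Setoid X := ⟨fun x y => (f x).2 = (f y).2 ∧ γ' x y,
      ⟨fun x => ⟨rfl, γ'.refl' x⟩, fun h => ⟨h.1.symm, γ'.symm' h.2⟩,
        fun h1 h2 => ⟨h1.1.trans h2.1, γ'.trans' h1.2 h2.2⟩⟩⟩
    let φ : Setoid X := ⟨fun x y => (f x).2 = (f y).2,
      ⟨fun _ => rfl, fun h => h.symm, fun h1 h2 => h1.trans h2⟩⟩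
    let φ' : Setoid X := ⟨fun x y => (f x).1 = (f y).1 ∧ γ' x y,
      ⟨fun x => ⟨rfl, γ'.refl' x⟩, fun h => ⟨h.1.symm, γ'.symm' h.2⟩,
        fun h1 h2 => ⟨h1.1.trans h2.1, γ'.trans' h1.2 h2.2⟩⟩⟩
    have hθd : ∀ x y : X, θ x y ↔ (f x).1 = (f y).1 := fun _ _ => Iff.rfl
    have hθ'd : ∀ x y : X, θ' x y ↔ (f x).2 = (f y).2 ∧ γ' x y := fun _ _ => Iff.rfl
    have hφd : ∀ x y : X, φ x y ↔ (f x).2 = (f y).2 := fun _ _ => Iff.rfl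
    have hφ'd : ∀ x y : X, φ' x y ↔ (f x).1 = (f y).1 ∧ γ' x y := fun _ _ => Iff.rfl
    -- γ' = θ' ∘ φ'
    have hA : ∀ x y : X, γ' x y ↔ ∃ z, θ' x z ∧ φ' z y := by
      intro x y
      constructor
      · intro hxy
        obtain ⟨z, hz1, hz2⟩ := key ((f y).1, (f x).2) y
        refine ⟨z, (hθ'd x z).mpr ⟨by rw [hz1], γ'.trans' hxy (γ'.symm' hz2)⟩,
          (hφ'd z y).mpr ⟨by rw [hz1], hz2⟩⟩
      · rintro ⟨z, h1, h2⟩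
        exact γ'.trans' ((hθ'd x z).mp h1).2 ((hφ'd z y).mp h2).2
    -- γ' = φ' ∘ θ'
    have hA' : ∀ x y : X, γ' x y ↔ ∃ z, φ' x z ∧ θ' z y := by
      intro x y
      constructor
      · intro hxy
        obtain ⟨z, hz1, hz2⟩ := key ((f x).1, (f y).2) y
        refine ⟨z, (hφ'd x z).mpr ⟨by rw [hz1], γ'.trans' hxy (γ'.symm' hz2)⟩,
          (hθ'd z y).mpr ⟨by rw [hz1], hz2⟩⟩
      · rintro ⟨z, h1, h2⟩
        exact γ'.trans' ((hφ'd x z).mp h1).2 ((hθ'd z y).mp h2).2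
    have hθp : IsFactorPair θ θ' := by
      constructor
      · intro x y
        constructor
        · rintro ⟨h1, h2⟩
          exact hDelta x y (hfg x y (Prod.ext ((hθd x y).mp h1) ((hθ'd x y).mp h2).1))
            ((hθ'd x y).mp h2).2
        · rintro rfl
          exact ⟨θ.refl' x, θ'.refl' x⟩
      · intro x y
        obtain ⟨z, hz1, hz2⟩ := key ((f x).1, (f y).2) y
        exact ⟨z, (hθd x z).mpr (by rw [hz1]), (hθ'd z y).mpr ⟨by rw [hz1], hz2⟩⟩
    have hφp : IsFactorPair φ φ' := by
      constructor
      · intro x y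
        constructor
        · rintro ⟨h1, h2⟩
          exact hDelta x y (hfg x y (Prod.ext ((hφ'd x y).mp h2).1 ((hφd x y).mp h1)))
            ((hφ'd x y).mp h2).2
        · rintro rfl
          exact ⟨φ.refl' x, φ'.refl' x⟩
      · intro x y
        obtain ⟨z, hz1, hz2⟩ := key ((f y).1, (f x).2) y
        exact ⟨z, (hφd x z).mpr (by rw [hz1]), (hφ'd z y).mpr ⟨by rw [hz1], hz2⟩⟩
    refine ⟨θ, θ', φ, φ', hθp, hφp, ?_, ⟨?_, ?_, ?_⟩, ?_, ?_⟩
    · -- orthogonality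
      refine ⟨Setoid.le_def.mpr (fun hxy => ?_), Setoid.le_def.mpr (fun hxy => ?_), ?_⟩
      · exact (hθd _ _).mpr ((hφ'd _ _).mp hxy).1
      · exact (hφd _ _).mpr ((hθ'd _ _).mp hxy).1
      · funext x y
        apply propext
        constructor
        · rintro ⟨z, h1, h2⟩
          exact (hA x y).mp (γ'.trans' ((hφ'd x z).mp h1).2 ((hθ'd z y).mp h2).2)
        · rintro ⟨z, h1, h2⟩
          exact (hA' x y).mp (γ'.trans' ((hθ'd x z).mp h1).2 ((hφ'd z y).mp h2).2)
    · -- FactLE θp γp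
      refine ⟨Setoid.le_def.mpr (fun hxy => ?_), Setoid.le_def.mpr (fun hxy => ?_), ?_⟩
      · exact (hθd _ _).mpr (congrArg Prod.fst (hgf _ _ hxy))
      · exact ((hθ'd _ _).mp hxy).2
      · funext x y
        apply propext
        have e1 : Relation.Comp (⇑γ) (⇑θ') x y ↔ (f x).2 = (f y).2 := by
          constructor
          · rintro ⟨z, h1, h2⟩
            exact (congrArg Prod.snd (hgf _ _ h1)).trans ((hθ'd z y).mp h2).1
          · intro hxy
            obtain ⟨w, hw1, hw2⟩ := h.2 x y
            exact ⟨w, hw1, (hθ'd w y).mpr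
              ⟨(congrArg Prod.snd (hgf _ _ hw1)).symm.trans hxy, hw2⟩⟩
        have e2 : Relation.Comp (⇑θ') (⇑γ) x y ↔ (f x).2 = (f y).2 := by
          constructor
          · rintro ⟨z, h1, h2⟩
            exact ((hθ'd x z).mp h1).1.trans (congrArg Prod.snd (hgf _ _ h2))
          · intro hxy
            obtain ⟨w, hw1, hw2⟩ := h.2 y x
            refine ⟨w, (hθ'd x w).mpr
              ⟨hxy.trans (congrArg Prod.snd (hgf _ _ hw1)), γ'.symm' hw2⟩, γ.symm' hw1⟩
        exact e1.trans e2.symm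
    · -- FactLE φp γp
      refine ⟨Setoid.le_def.mpr (fun hxy => ?_), Setoid.le_def.mpr (fun hxy => ?_), ?_⟩
      · exact (hφd _ _).mpr (congrArg Prod.snd (hgf _ _ hxy))
      · exact ((hφ'd _ _).mp hxy).2
      · funext x y
        apply propext
        have e1 : Relation.Comp (⇑γ) (⇑φ') x y ↔ (f x).1 = (f y).1 := by
          constructor
          · rintro ⟨z, h1, h2⟩
            exact (congrArg Prod.fst (hgf _ _ h1)).trans ((hφ'd z y).mp h2).1
          · intro hxy
            obtain ⟨w, hw1, hw2⟩ := h.2 x y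
            exact ⟨w, hw1, (hφ'd w y).mpr
              ⟨(congrArg Prod.fst (hgf _ _ hw1)).symm.trans hxy, hw2⟩⟩
        have e2 : Relation.Comp (⇑φ') (⇑γ) x y ↔ (f x).1 = (f y).1 := by
          constructor
          · rintro ⟨z, h1, h2⟩
            exact ((hφ'd x z).mp h1).1.trans (congrArg Prod.fst (hgf _ _ h2))
          · intro hxy
            obtain ⟨w, hw1, hw2⟩ := h.2 y x
            refine ⟨w, (hφ'd x w).mpr
              ⟨hxy.trans (congrArg Prod.fst (hgf _ _ hw1)), γ'.symm' hw2⟩, γ.symm' hw1⟩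
        exact e1.trans e2.symm
    · -- least upper bound
      intro u hu1 hu2
      have c1 : ∀ a b : X, Relation.Comp (⇑u.1.1) (⇑θ') a b ↔
          Relation.Comp (⇑θ') (⇑u.1.1) a b :=
        fun a b => iff_of_eq (congrFun (congrFun hu1.2.2 a) b)
      have c2 : ∀ a b : X, Relation.Comp (⇑u.1.1) (⇑φ') a b ↔
          Relation.Comp (⇑φ') (⇑u.1.1) a b :=
        fun a b => iff_of_eq (congrFun (congrFun hu2.2.2 a) b)
      refine ⟨Setoid.le_def.mpr (fun {x y} hxy => ?_),
        Setoid.le_def.mpr (fun {x y} hxy => ?_), ?_⟩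
      · exact hfg x y (Prod.ext ((hθd x y).mp (Setoid.le_def.mp hu1.1 hxy))
          ((hφd x y).mp (Setoid.le_def.mp hu2.1 hxy)))
      · obtain ⟨z, hz1, hz2⟩ := (hA' x y).mp hxy
        exact u.1.2.trans' (Setoid.le_def.mp hu2.2.1 hz1) (Setoid.le_def.mp hu1.2.1 hz2)
      · funext x y
        apply propext
        constructor
        · rintro ⟨z, hxz, hzy⟩
          obtain ⟨w, hw1, hw2⟩ := (hA z y).mp hzy
          obtain ⟨v, hv1, hv2⟩ := (c1 x w).mp ⟨z, hxz, hw1⟩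
          obtain ⟨t, ht1, ht2⟩ := (c2 v y).mp ⟨w, hv2, hw2⟩
          exact ⟨t, γ'.trans' ((hθ'd x v).mp hv1).2 ((hφ'd v t).mp ht1).2, ht2⟩
        · rintro ⟨z, hxz, hzy⟩
          obtain ⟨w, hw1, hw2⟩ := (hA' x z).mp hxz
          obtain ⟨v, hv1, hv2⟩ := (c1 w y).mpr ⟨z, hw2, hzy⟩
          obtain ⟨t, ht1, ht2⟩ := (c2 x v).mpr ⟨w, hw1, hv1⟩
          exact ⟨t, ht1, γ'.trans' ((hφ'd t v).mp ht2).2 ((hθ'd v y).mp hv2).2⟩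
    · -- card of Quotient θ
      have x0 : X := (e.symm (⟨0, hm⟩, ⟨0, hn⟩)).out
      let g : Quotient θ → Fin m := Quotient.lift (fun x => (f x).1)
        (fun a b hab => (hθd a b).mp hab)
      have ginj : Function.Injective g := by
        intro a b
        refine Quotient.inductionOn₂ a b (fun x y hxy => Quotient.sound ?_)
        exact (hθd x y).mpr hxy
      have gsurj : Function.Surjective g := by
        intro a
        obtain ⟨z, hz1, _⟩ := key (a, ⟨0, hn⟩) x0
        exact ⟨Quotient.mk θ z, by show (f z).1 = a; rw [hz1]⟩
      refine ⟨Finite.of_injective g ginj, ?_⟩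
      rw [Nat.card_eq_of_bijective g ⟨ginj, gsurj⟩]
      simp [Nat.card_eq_fintype_card]
    · -- card of Quotient φ
      have x0 : X := (e.symm (⟨0, hm⟩, ⟨0, hn⟩)).out
      let g : Quotient φ → Fin n := Quotient.lift (fun x => (f x).2)
        (fun a b hab => (hφd a b).mp hab)
      have ginj : Function.Injective g := by
        intro a b
        refine Quotient.inductionOn₂ a b (fun x y hxy => Quotient.sound ?_)
        exact (hφd x y).mpr hxy
      have gsurj : Function.Surjective g := by
        intro a
        obtain ⟨z, hz1, _⟩ := key (⟨0, hm⟩, a) x0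
        exact ⟨Quotient.mk φ z, by show (f z).2 = a; rw [hz1]⟩
      refine ⟨Finite.of_injective g ginj, ?_⟩
      rw [Nat.card_eq_of_bijective g ⟨ginj, gsurj⟩]
      simp [Nat.card_eq_fintype_card]
  · rintro ⟨θ, θ', φ, φ', hθp, hφp, hortho, ⟨hθγ, hφγ, hub⟩, ⟨hθfin, hθcard⟩, ⟨hφfin, hφcard⟩⟩
    have c0 : ∀ a b : X, Relation.Comp (⇑φ') (⇑θ') a b ↔ Relation.Comp (⇑θ') (⇑φ') a b :=
      fun a b => iff_of_eq (congrFun (congrFun hortho.2.2 a) b)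
    have hφ'θ : ∀ {x y : X}, φ' x y → θ x y := fun hxy => Setoid.le_def.mp hortho.1 hxy
    have hθ'φ : ∀ {x y : X}, θ' x y → φ x y := fun hxy => Setoid.le_def.mp hortho.2.1 hxy
    let ψ : Setoid X := ⟨fun x y => θ x y ∧ φ x y,
      ⟨fun x => ⟨θ.refl' x, φ.refl' x⟩, fun h => ⟨θ.symm' h.1, φ.symm' h.2⟩,
        fun h1 h2 => ⟨θ.trans' h1.1 h2.1, φ.trans' h1.2 h2.2⟩⟩⟩
    let ψ' : Setoid X := ⟨fun x y => ∃ z, θ' x z ∧ φ' z y,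
      ⟨fun x => ⟨x, θ'.refl' x, φ'.refl' x⟩,
        fun {x y} h => by
          obtain ⟨z, h1, h2⟩ := h
          exact (c0 y x).mp ⟨z, φ'.symm' h2, θ'.symm' h1⟩,
        fun {x y z} h1 h2 => by
          obtain ⟨a, ha1, ha2⟩ := h1
          obtain ⟨b, hb1, hb2⟩ := h2
          obtain ⟨w, hw1, hw2⟩ := (c0 a b).mp ⟨y, ha2, hb1⟩
          exact ⟨w, θ'.trans' ha1 hw1, φ'.trans' hw2 hb2⟩⟩⟩
    have hψd : ∀ x y : X, ψ x y ↔ θ x y ∧ φ x y := fun _ _ => Iff.rfl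
    have hψ'd : ∀ x y : X, ψ' x y ↔ ∃ z, θ' x z ∧ φ' z y := fun _ _ => Iff.rfl
    have hψp : IsFactorPair ψ ψ' := by
      constructor
      · intro x y
        constructor
        · rintro ⟨hp, hq⟩
          obtain ⟨hθxy, hφxy⟩ := (hψd x y).mp hp
          obtain ⟨z, hz1, hz2⟩ := (hψ'd x y).mp hq
          have hxz : x = z := (hθp.1 x z).1
            ⟨θ.trans' hθxy (θ.symm' (hφ'θ hz2)), hz1⟩
          subst hxz
          exact (hφp.1 x y).1 ⟨hφxy, hz2⟩
        · rintro rfl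
          exact ⟨ψ.refl' x, ψ'.refl' x⟩
      · intro x y
        obtain ⟨w, hw1, hw2⟩ := hφp.2 x y
        obtain ⟨z, hz1, hz2⟩ := hθp.2 x w
        exact ⟨z, (hψd x z).mpr ⟨hz1, φ.trans' hw1 (φ.symm' (hθ'φ hz2))⟩,
          (hψ'd z y).mpr ⟨w, hz2, hw2⟩⟩
    have hψθ : FactLE ⟨(θ, θ'), hθp⟩ ⟨(ψ, ψ'), hψp⟩ := by
      refine ⟨Setoid.le_def.mpr (fun hxy => ((hψd _ _).mp hxy).1),
        Setoid.le_def.mpr (fun {x y} hxy => (hψ'd x y).mpr ⟨y, hxy, φ'.refl' y⟩), ?_⟩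
      funext x y
      apply propext
      constructor
      · rintro ⟨z, hxz, hzy⟩
        obtain ⟨hθxz, hφxz⟩ := (hψd x z).mp hxz
        obtain ⟨w, hw1, hw2⟩ := hθp.2 y x
        refine ⟨w, θ'.symm' hw2, (hψd w y).mpr ⟨θ.symm' hw1, ?_⟩⟩
        exact φ.trans' (φ.symm' (hθ'φ (θ'.symm' hw2))) (φ.trans' hφxz (hθ'φ hzy))
      · rintro ⟨z, hxz, hzy⟩
        obtain ⟨hθzy, hφzy⟩ := (hψd z y).mp hzy
        obtain ⟨w, hw1, hw2⟩ := hθp.2 x y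
        refine ⟨w, (hψd x w).mpr ⟨hw1, ?_⟩, hw2⟩
        exact φ.trans' (φ.trans' (hθ'φ hxz) hφzy) (φ.symm' (hθ'φ hw2))
    have hψφ : FactLE ⟨(φ, φ'), hφp⟩ ⟨(ψ, ψ'), hψp⟩ := by
      refine ⟨Setoid.le_def.mpr (fun hxy => ((hψd _ _).mp hxy).2),
        Setoid.le_def.mpr (fun {x y} hxy => (hψ'd x y).mpr ⟨x, θ'.refl' x, hxy⟩), ?_⟩
      funext x y
      apply propext
      constructor
      · rintro ⟨z, hxz, hzy⟩
        obtain ⟨hθxz, hφxz⟩ := (hψd x z).mp hxz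
        obtain ⟨w, hw1, hw2⟩ := hφp.2 y x
        refine ⟨w, φ'.symm' hw2, (hψd w y).mpr ⟨?_, φ.symm' hw1⟩⟩
        exact θ.trans' (θ.symm' (hφ'θ (φ'.symm' hw2))) (θ.trans' hθxz (hφ'θ hzy))
      · rintro ⟨z, hxz, hzy⟩
        obtain ⟨hθzy, hφzy⟩ := (hψd z y).mp hzy
        obtain ⟨w, hw1, hw2⟩ := hφp.2 x y
        refine ⟨w, (hψd x w).mpr ⟨?_, hw1⟩, hw2⟩
        exact θ.trans' (θ.trans' (hφ'θ hxz) hθzy) (θ.symm' (hφ'θ hw2))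
    have hlub := hub ⟨(ψ, ψ'), hψp⟩ hψθ hψφ
    have hψγ : ∀ {x y : X}, θ x y → φ x y → γ x y := fun {x y} h1 h2 =>
      Setoid.le_def.mp hlub.1 ((hψd x y).mpr ⟨h1, h2⟩)
    have hγθ : ∀ {x y : X}, γ x y → θ x y := fun hxy => Setoid.le_def.mp hθγ.1 hxy
    have hγφ : ∀ {x y : X}, γ x y → φ x y := fun hxy => Setoid.le_def.mp hφγ.1 hxy
    let g : Quotient γ → Quotient θ × Quotient φ := Quotient.lift
      (fun x => (Quotient.mk θ x, Quotient.mk φ x))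
      (fun a b hab => Prod.ext (Quotient.sound (hγθ hab)) (Quotient.sound (hγφ hab)))
    have ginj : Function.Injective g := by
      intro a b
      refine Quotient.inductionOn₂ a b (fun x y hxy => Quotient.sound ?_)
      rw [Prod.ext_iff] at hxy
      exact hψγ (Quotient.exact hxy.1) (Quotient.exact hxy.2)
    have gsurj : Function.Surjective g := by
      rintro ⟨a, b⟩
      refine Quotient.inductionOn₂ a b (fun x y => ?_)
      obtain ⟨z, hz1, hz2⟩ := hθp.2 x y
      exact ⟨Quotient.mk γ z, Prod.ext (Quotient.sound (θ.symm' hz1))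
        (Quotient.sound (hθ'φ hz2))⟩
    haveI := hθfin
    haveI := hφfin
    refine ⟨Finite.of_injective g ginj, ?_⟩
    rw [Nat.card_eq_of_bijective g ⟨ginj, gsurj⟩, Nat.card_prod, hθcard, hφcard]
end
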